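/- Let p be a prime and n ≥ 1. Both A^{n−1} and P_n are self-centralizing in Sym(F_p^n): the centralizer of A^{n−1} in Sym(F_p^n) is contained in A^{n−1}, and the centralizer of P_n in Sym(F_p^n) is contained in P_n. -/

import Mathlib

variable (p n : ℕ)

/-- The underlying function of the generator `σ_i`. -/
def sigmaFun (i : Fin n) (lam : Fin n → ZMod p) : Fin n → ZMod p :=
  fun k => if k = i ∧ ∀ j : Fin n, j < i → lam j = 0 then lam k + 1 else lam k

lemma sigmaFun_apply_ne (i : Fin n) (lam : Fin n → ZMod p) {k : Fin n} (h : k ≠ i) :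
    sigmaFun p n i lam k = lam k := by
  simp [sigmaFun, h]

/-- The inverse function of `σ_i`. -/
def sigmaInvFun (i : Fin n) (lam : Fin n → ZMod p) : Fin n → ZMod p :=
  fun k => if k = i ∧ ∀ j : Fin n, j < i → lam j = 0 then lam k - 1 else lam k

lemma sigmaInvFun_apply_ne (i : Fin n) (lam : Fin n → ZMod p) {k : Fin n} (h : k ≠ i) :
    sigmaInvFun p n i lam k = lam k := by
  simp [sigmaInvFun, h]

lemma sigmaFun_cond (i : Fin n) (lam : Fin n → ZMod p) :
    (∀ j : Fin n, j < i → sigmaFun p n i lam j = 0) ↔ (∀ j : Fin n, j < i → lam j = 0) := by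
  constructor
  · intro h j hj
    have := h j hj
    rwa [sigmaFun_apply_ne p n i lam (ne_of_lt hj)] at this
  · intro h j hj
    rw [sigmaFun_apply_ne p n i lam (ne_of_lt hj)]
    exact h j hj

lemma sigmaInvFun_cond (i : Fin n) (lam : Fin n → ZMod p) :
    (∀ j : Fin n, j < i → sigmaInvFun p n i lam j = 0) ↔ (∀ j : Fin n, j < i → lam j = 0) := by
  constructor
  · intro h j hj
    have := h j hj
    rwa [sigmaInvFun_apply_ne p n i lam (ne_of_lt hj)] at this
  · intro h j hj
    rw [sigmaInvFun_apply_ne p n i lam (ne_of_lt hj)]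
    exact h j hj

/-- The generator `σ_i` of the Sylow `p`-subgroup of `Sym(F_p^n)`: it fixes
`(λ_0, …, λ_{n-1})` if `λ_j ≠ 0` for some `j < i`, and otherwise replaces the entry
`λ_i` by `λ_i + 1`. -/
def sigmaPerm (i : Fin n) : Equiv.Perm (Fin n → ZMod p) where
  toFun := sigmaFun p n i
  invFun := sigmaInvFun p n i
  left_inv := by
    intro lam
    funext k
    by_cases hk : k = i
    · subst hk
      show sigmaInvFun p n k (sigmaFun p n k lam) k = lam k
      by_cases hc : ∀ j : Fin n, j < k → lam j = 0
      · have hC : ∀ j : Fin n, j < k → sigmaFun p n k lam j = 0 :=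
          (sigmaFun_cond p n k lam).mpr hc
        unfold sigmaInvFun
        rw [if_pos ⟨rfl, hC⟩]
        unfold sigmaFun
        rw [if_pos ⟨rfl, hc⟩]
        ring
      · have hC : ¬ ∀ j : Fin n, j < k → sigmaFun p n k lam j = 0 :=
          fun h => hc ((sigmaFun_cond p n k lam).mp h)
        unfold sigmaInvFun
        rw [if_neg (by tauto)]
        unfold sigmaFun
        rw [if_neg (by tauto)]
    · exact (sigmaInvFun_apply_ne p n i _ hk).trans (sigmaFun_apply_ne p n i lam hk)
  right_inv := by
    intro lam
    funext k
    by_cases hk : k = i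
    · subst hk
      show sigmaFun p n k (sigmaInvFun p n k lam) k = lam k
      by_cases hc : ∀ j : Fin n, j < k → lam j = 0
      · have hC : ∀ j : Fin n, j < k → sigmaInvFun p n k lam j = 0 :=
          (sigmaInvFun_cond p n k lam).mpr hc
        unfold sigmaFun
        rw [if_pos ⟨rfl, hC⟩]
        unfold sigmaInvFun
        rw [if_pos ⟨rfl, hc⟩]
        ring
      · have hC : ¬ ∀ j : Fin n, j < k → sigmaInvFun p n k lam j = 0 :=
          fun h => hc ((sigmaInvFun_cond p n k lam).mp h)
        unfold sigmaFun
        rw [if_neg (by tauto)]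
        unfold sigmaInvFun
        rw [if_neg (by tauto)]
    · exact (sigmaFun_apply_ne p n i _ hk).trans (sigmaInvFun_apply_ne p n i lam hk)

/-- `P_n = ⟨σ_0, …, σ_{n-1}⟩`, a Sylow `p`-subgroup of `Sym(F_p^n)`. -/
def PSyl : Subgroup (Equiv.Perm (Fin n → ZMod p)) :=
  Subgroup.closure (Set.range (sigmaPerm p n))


/-- `A^{n-1}`, the normal closure of `⟨σ_{n-1}⟩` in `P_n`: the subgroup generated by
all `P_n`-conjugates of `σ_{n-1}`. -/
def Abase (hn : 1 ≤ n) : Subgroup (Equiv.Perm (Fin n → ZMod p)) :=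
  Subgroup.closure
    {x | ∃ g ∈ PSyl p n, x = g * sigmaPerm p n ⟨n - 1, by omega⟩ * g⁻¹}


/-!
Write `F_p^{m+1} = F_p^m × F_p`. The permutations translating the last coordinate by an arbitrary
function of the other coordinates all lie in `A^m`: `σ_m` is the unit translation on the fibre
over `0`, conjugating it by lifts of elements of `P_m` (which is transitive on `F_p^m`) gives the
unit translation on any fibre, and these generate all fibre translations. Conversely, a
permutation commuting with every fibre translation preserves each fibre (it maps the fixed points
of the translation supported on one fibre to fixed points) and commutes with the translations
inside it, so it is itself a fibre translation. Hence `C(A^m) ≤ A^m`, and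
`C(P_{m+1}) ≤ C(A^m) ≤ A^m ≤ P_{m+1}`.
-/

open Equiv

section Wreath

variable {α A : Type*} [AddCommGroup A] {m : ℕ}

/-- On `P_m` this is the embedding of the top group of `P_{m+1} ≅ C_p ≀ P_m`. -/
def liftPerm : Perm (Fin m → α) →* Perm (Fin (m + 1) → α) where
  toFun h :=
    { toFun := fun x => Fin.snoc (h (Fin.init x)) (x (Fin.last m))
      invFun := fun x => Fin.snoc (h.symm (Fin.init x)) (x (Fin.last m))
      left_inv := fun x => by simp
      right_inv := fun x => by simp }
  map_one' := by ext; simp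
  map_mul' g h := by ext; simp

@[simp]
theorem liftPerm_apply (h : Perm (Fin m → α)) (x : Fin (m + 1) → α) :
    liftPerm h x = Fin.snoc (h (Fin.init x)) (x (Fin.last m)) := rfl

/-- The elements of the base group of `A ≀ Sym(A^m)`. -/
def lastShift (f : (Fin m → A) → A) : Perm (Fin (m + 1) → A) where
  toFun x := Fin.snoc (Fin.init x) (x (Fin.last m) + f (Fin.init x))
  invFun x := Fin.snoc (Fin.init x) (x (Fin.last m) - f (Fin.init x))
  left_inv x := by simp
  right_inv x := by simp

@[simp]
theorem lastShift_apply (f : (Fin m → A) → A) (x : Fin (m + 1) → A) :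
    lastShift f x = Fin.snoc (Fin.init x) (x (Fin.last m) + f (Fin.init x)) := rfl

@[simp]
theorem lastShift_zero : lastShift (0 : (Fin m → A) → A) = 1 := by
  ext x : 1; simp

theorem lastShift_add (f g : (Fin m → A) → A) :
    lastShift (f + g) = lastShift f * lastShift g := by
  ext x : 1; simp [add_comm (f _), add_assoc]

theorem lastShift_nsmul (f : (Fin m → A) → A) (k : ℕ) :
    lastShift (k • f) = lastShift f ^ k := by
  induction k with
  | zero => simp
  | succ k ih => rw [succ_nsmul, lastShift_add, ih, pow_succ]

theorem liftPerm_mul_lastShift_mul_inv (h : Perm (Fin m → A)) (f : (Fin m → A) → A) :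
    liftPerm h * lastShift f * (liftPerm h)⁻¹ = lastShift (f ∘ h.symm) := by
  rw [mul_inv_eq_iff_eq_mul]
  ext x : 1
  simp

theorem exists_eq_lastShift_of_forall_commute [Nontrivial A] {c : Perm (Fin (m + 1) → A)}
    (hc : ∀ f, Commute c (lastShift f)) : ∃ g, c = lastShift g := by
  classical
  have comm (f) (x) : c (lastShift f x) = lastShift f (c x) := DFunLike.congr_fun (hc f) x
  have init_apply (x) : Fin.init (c x) = Fin.init x := by
    by_contra hx
    obtain ⟨a, ha⟩ := exists_ne (0 : A)
    -- the shift supported on the fibre over `Fin.init (c x)` fixes `x` but moves `c x`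
    have := congr_arg (· (Fin.last m)) (comm (Pi.single (Fin.init (c x)) a) x)
    exact ha (by simpa [Ne.symm hx] using this)
  have shift (v : Fin m → A) (a : A) :
      c (Fin.snoc v a) = Fin.snoc v (c (Fin.snoc v 0) (Fin.last m) + a) := by
    simpa [init_apply] using comm (Pi.single v a) (Fin.snoc v 0)
  refine ⟨fun v => c (Fin.snoc v 0) (Fin.last m), Equiv.ext fun x => ?_⟩
  conv_lhs => rw [← Fin.snoc_init_self x, shift]
  simp [add_comm]

end Wreath

section Sylow

variable {p m : ℕ}

theorem liftPerm_sigmaPerm (i : Fin m) :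
    liftPerm (sigmaPerm p m i) = sigmaPerm p (m + 1) i.castSucc := by
  ext x j
  induction j using Fin.lastCases with
  | last => simp [sigmaPerm, sigmaFun, (Fin.castSucc_lt_last i).ne']
  | cast k =>
    have : ¬ Fin.last m < i.castSucc := not_lt.2 (Fin.le_last _)
    simp [sigmaPerm, sigmaFun, Fin.forall_fin_succ', Fin.init, this]
    congr 1

theorem sigmaPerm_last :
    sigmaPerm p (m + 1) (Fin.last m) = lastShift (Pi.single 0 1) := by
  ext x j
  induction j using Fin.lastCases with
  | last =>
    simp [sigmaPerm, sigmaFun, Fin.forall_fin_succ', Fin.init, Pi.single_apply, funext_iff]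
    split_ifs <;> simp
  | cast k => simp [sigmaPerm, sigmaFun, Fin.init]

theorem sigmaPerm_mem_PSyl (i : Fin m) : sigmaPerm p m i ∈ PSyl p m :=
  Subgroup.subset_closure ⟨i, rfl⟩

theorem liftPerm_mem_PSyl {h : Perm (Fin m → ZMod p)} (hh : h ∈ PSyl p m) :
    liftPerm h ∈ PSyl p (m + 1) := by
  suffices PSyl p m ≤ (PSyl p (m + 1)).comap liftPerm from this hh
  rw [PSyl, Subgroup.closure_le]
  rintro _ ⟨i, rfl⟩
  simpa [liftPerm_sigmaPerm] using sigmaPerm_mem_PSyl i.castSucc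

theorem exists_mem_PSyl_apply_zero_eq [NeZero p] (v : Fin m → ZMod p) :
    ∃ h ∈ PSyl p m, h 0 = v := by
  -- first reach `(0, v_last)` with `σ_last`, then move the other coordinates by a lift
  induction m with
  | zero => exact ⟨1, one_mem _, Subsingleton.elim _ _⟩
  | succ m ih =>
    obtain ⟨h, hh, hv⟩ := ih (Fin.init v)
    refine ⟨liftPerm h * sigmaPerm p (m + 1) (Fin.last m) ^ (v (Fin.last m)).val,
      mul_mem (liftPerm_mem_PSyl hh) (pow_mem (sigmaPerm_mem_PSyl _) _), ?_⟩
    have init_zero : Fin.init (0 : Fin (m + 1) → ZMod p) = 0 := rfl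
    rw [sigmaPerm_last, ← lastShift_nsmul]
    simp only [Perm.mul_apply, lastShift_apply, liftPerm_apply, init_zero, Fin.init_snoc,
      Fin.snoc_last, Pi.smul_apply, Pi.single_eq_same, nsmul_one, ZMod.natCast_zmod_val, hv,
      Pi.zero_apply, zero_add, Fin.snoc_init_self]

theorem Abase_le_PSyl (hn : 1 ≤ m) : Abase p m hn ≤ PSyl p m := by
  rw [Abase, Subgroup.closure_le]
  rintro _ ⟨g, hg, rfl⟩
  exact mul_mem (mul_mem hg (sigmaPerm_mem_PSyl _)) (inv_mem hg)

theorem lastShift_single_one_mem_Abase [NeZero p] (hn : 1 ≤ m + 1) (v : Fin m → ZMod p) :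
    lastShift (Pi.single v 1) ∈ Abase p (m + 1) hn := by
  obtain ⟨h, hh, rfl⟩ := exists_mem_PSyl_apply_zero_eq (p := p) v
  refine Subgroup.subset_closure ⟨liftPerm h, liftPerm_mem_PSyl hh, ?_⟩
  rw [show (⟨m + 1 - 1, _⟩ : Fin (m + 1)) = Fin.last m from rfl, sigmaPerm_last,
    liftPerm_mul_lastShift_mul_inv]
  congr 1
  ext y
  simp [Pi.single_apply, Equiv.symm_apply_eq]

theorem lastShift_mem_Abase [NeZero p] (hn : 1 ≤ m + 1) (f : (Fin m → ZMod p) → ZMod p) :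
    lastShift f ∈ Abase p (m + 1) hn := by
  classical
  induction f using Pi.single_induction with
  | zero => simp
  | add f g hf hg => rw [lastShift_add]; exact mul_mem hf hg
  | single v a =>
    rw [← ZMod.natCast_zmod_val a, ← nsmul_one, Pi.single_smul, lastShift_nsmul]
    exact pow_mem (lastShift_single_one_mem_Abase hn v) _

theorem centralizer_Abase_le [NeZero p] [Nontrivial (ZMod p)] (hn : 1 ≤ m + 1) :
    Subgroup.centralizer (Abase p (m + 1) hn : Set (Perm (Fin (m + 1) → ZMod p))) ≤
      Abase p (m + 1) hn := by
  intro c hc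
  obtain ⟨g, rfl⟩ := exists_eq_lastShift_of_forall_commute fun f =>
    (Subgroup.mem_centralizer_iff.1 hc _ (lastShift_mem_Abase hn f)).symm
  exact lastShift_mem_Abase hn g

end Sylow

/-- Both `A^{n-1}` and `P_n` are self-centralizing in `Sym(F_p^n)`. -/
theorem centralizer_Abase_le_and_centralizer_PSyl_le (hp : p.Prime) (hn : 1 ≤ n) :
    Subgroup.centralizer ((Abase p n hn : Subgroup (Equiv.Perm (Fin n → ZMod p))) :
        Set (Equiv.Perm (Fin n → ZMod p))) ≤ Abase p n hn ∧
    Subgroup.centralizer ((PSyl p n : Subgroup (Equiv.Perm (Fin n → ZMod p))) :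
        Set (Equiv.Perm (Fin n → ZMod p))) ≤ PSyl p n := by
  have := Fact.mk hp
  obtain ⟨m, rfl⟩ : ∃ m, n = m + 1 := ⟨n - 1, by omega⟩
  have hA := centralizer_Abase_le (p := p) hn
  exact ⟨hA, fun c hc => Abase_le_PSyl hn (hA (Subgroup.centralizer_le (Abase_le_PSyl hn) hc))⟩
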